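/- arXiv:1209.6537 — 4 statements merged into one kernel-verified Lean document; each statement's English description precedes it below -/
import Mathlib

section
/- Let d ≥ 2 and suppose a_2, ..., a_d ∈ ℝ^d are linearly independent vectors. Then there exist at most two d-tuples (b_1, ..., b_d) of vectors in ℝ^d satisfying |b_1| = |b_2| = ... = |b_d| = 1 and b_j - b_1 = a_j for all j = 2, ..., d. -/
/-!
With `x = b₁`, the conditions say `‖x‖ = 1` and `‖x + aⱼ‖ = ‖x‖` for every `j ≥ 2`, and the
tuple is determined by `x`. Each condition `‖x + aⱼ‖ = ‖x‖` is the affine equation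
`2 ⟪x, aⱼ⟫ = -‖aⱼ‖²`, so any two admissible `x` differ by a vector orthogonal to all `aⱼ`.
As the `d - 1` vectors `aⱼ` are independent, their orthogonal complement is a line, and a line
meets a sphere in at most two points.
-/

open Module Submodule EuclideanGeometry
open scoped RealInnerProductSpace

section

variable {E : Type*} [NormedAddCommGroup E] [InnerProductSpace ℝ E]

theorem inner_sub_eq_zero_of_norm_add_eq {x y a : E} (hx : ‖x + a‖ = ‖x‖)
    (hy : ‖y + a‖ = ‖y‖) : ⟪y - x, a⟫ = 0 := by
  have hx' := congrArg (· ^ 2) hx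
  have hy' := congrArg (· ^ 2) hy
  simp only [norm_add_sq_real] at hx' hy'
  rw [inner_sub_left]
  linarith

theorem sub_mem_orthogonal_span_range_of_norm_add_eq {ι : Type*} {v : ι → E} {x y : E}
    (hx : ∀ i, ‖x + v i‖ = ‖x‖) (hy : ∀ i, ‖y + v i‖ = ‖y‖) :
    y - x ∈ (span ℝ (Set.range v))ᗮ := by
  have hle : span ℝ (Set.range v) ≤ (ℝ ∙ (y - x))ᗮ :=
    span_le.mpr <| Set.range_subset_iff.mpr fun i =>
      mem_orthogonal_singleton_iff_inner_right.mpr <|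
        inner_sub_eq_zero_of_norm_add_eq (hx i) (hy i)
  exact (span_singleton_le_iff_mem _ _).mp (isOrtho_iff_le.mpr hle).symm

end

theorem finrank_orthogonal_span_range {𝕜 E ι : Type*} [RCLike 𝕜] [NormedAddCommGroup E]
    [InnerProductSpace 𝕜 E] [FiniteDimensional 𝕜 E] [Fintype ι] {v : ι → E}
    (hv : LinearIndependent 𝕜 v) :
    finrank 𝕜 (span 𝕜 (Set.range v))ᗮ = finrank 𝕜 E - Fintype.card ι := by
  rw [← (span 𝕜 (Set.range v)).finrank_add_finrank_orthogonal, finrank_span_eq_card hv]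
  omega

theorem exists_pair_superset_of_norm_add_eq {E ι : Type*} [NormedAddCommGroup E]
    [InnerProductSpace ℝ E] [FiniteDimensional ℝ E] [Fintype ι] {v : ι → E}
    (hv : LinearIndependent ℝ v) (hdim : finrank ℝ E ≤ Fintype.card ι + 1) (r : ℝ) :
    ∃ p q : E, {x : E | ‖x‖ = r ∧ ∀ i, ‖x + v i‖ = r} ⊆ {p, q} := by
  rcases Set.eq_empty_or_nonempty {x : E | ‖x‖ = r ∧ ∀ i, ‖x + v i‖ = r} with h | ⟨x₀, hx₀⟩
  · exact ⟨0, 0, h ▸ Set.empty_subset _⟩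
  have hline : finrank ℝ (span ℝ (Set.range v))ᗮ ≤ 1 := by
    rw [finrank_orthogonal_span_range hv]
    omega
  obtain ⟨u, hu⟩ := finrank_le_one_iff.mp hline
  let s : Sphere E := ⟨0, r⟩
  have mem_s {x : E} (hx : ‖x‖ = r) : x ∈ s := by
    rwa [mem_sphere, dist_zero_right]
  refine ⟨x₀, s.secondInter x₀ u, fun x hx => ?_⟩
  have hx_line : x ∈ AffineSubspace.mk' x₀ (ℝ ∙ (u : E)) := by
    rw [AffineSubspace.mem_mk', vsub_eq_sub, mem_span_singleton]
    obtain ⟨c, hc⟩ := hu ⟨x - x₀, sub_mem_orthogonal_span_range_of_norm_add_eq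
      (fun i => (hx₀.2 i).trans hx₀.1.symm) (fun i => (hx.2 i).trans hx.1.symm)⟩
    exact ⟨c, congrArg Subtype.val hc⟩
  exact (s.eq_or_eq_secondInter_of_mem_mk'_span_singleton_iff_mem (mem_s hx₀.1) hx_line).mpr
    (mem_s hx.1)

theorem eq_add_update_zero_of_sub_eq {ι M : Type*} [DecidableEq ι] [AddCommGroup M]
    {a b : ι → M} {i₀ : ι} (h : ∀ j, j ≠ i₀ → b j - b i₀ = a j) :
    b = fun j => b i₀ + Function.update a i₀ 0 j := by
  funext j
  by_cases hj : j = i₀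
  · subst hj
    simp
  · rw [Function.update_of_ne hj, ← h j hj, add_sub_cancel]

theorem unit_chords_at_most_two (d : ℕ) (hd : 2 ≤ d)
    (a : Fin d → EuclideanSpace ℝ (Fin d))
    (ha : LinearIndependent ℝ
      (fun j : {j : Fin d // j ≠ ⟨0, by omega⟩} => a j.1)) :
    ∃ b₁ b₂ : Fin d → EuclideanSpace ℝ (Fin d),
      {b : Fin d → EuclideanSpace ℝ (Fin d) |
        (∀ i, ‖b i‖ = 1) ∧
        ∀ j : Fin d, j ≠ ⟨0, by omega⟩ → b j - b ⟨0, by omega⟩ = a j} ⊆ {b₁, b₂} := by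
  set i₀ : Fin d := ⟨0, by omega⟩
  have hdim : finrank ℝ (EuclideanSpace ℝ (Fin d)) ≤ Fintype.card {j : Fin d // j ≠ i₀} + 1 := by
    simp only [finrank_euclideanSpace_fin, Fintype.card_subtype_compl, Fintype.card_fin,
      Fintype.card_unique]
    omega
  obtain ⟨p, q, hpq⟩ := exists_pair_superset_of_norm_add_eq ha hdim 1
  refine ⟨fun j => p + Function.update a i₀ 0 j, fun j => q + Function.update a i₀ 0 j, ?_⟩
  rintro b ⟨hnorm, hsub⟩
  have hb₀ : b i₀ ∈ ({p, q} : Set _) :=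
    hpq ⟨hnorm i₀, fun j => by rw [← hsub j j.2, add_sub_cancel]; exact hnorm j⟩
  rw [eq_add_update_zero_of_sub_eq hsub]
  obtain h | h : b i₀ = p ∨ b i₀ = q := hb₀
  · exact Or.inl (by rw [h])
  · exact Or.inr (by rw [h]; exact Set.mem_singleton _)
end

section
/- Fix d ≥ 2. There is a constant C_d > 0 such that for every finite set P ⊂ ℝ^d with the property that every d-element subset of P is affinely independent, the number of ordered pairs (p_1, p_2) ∈ P × P with |p_1 - p_2| = 1 is at most C_d · |P|^{(2d-1)/d}. -/
/-!
If `S` is an affinely independent set of `d` points in `ℝ^d`, two points at the same distance from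
every point of `S` differ by a vector orthogonal to the hyperplane spanned by `S`; so all such
points lie on one line, which meets the unit sphere about a point of `S` at most twice. Counting
the pairs `(p, S)` with `S` a `d`-subset of the unit neighbours of `p` therefore gives
`∑ₚ C(deg p, d) ≤ 2 C(n, d)`, hence `∑ₚ (deg p - d)^d ≤ 2 nᵈ`, and the power mean inequality turns
this into `∑ₚ deg p ≤ 2 n^((2d-1)/d) + d n`.
-/

open EuclideanGeometry Module Finset

theorem sum_sub_pow_le_of_sum_choose_le {ι : Type*} (s : Finset ι) (f : ι → ℕ) (d k n : ℕ)
    (h : ∑ i ∈ s, (f i).choose d ≤ k * n.choose d) :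
    ∑ i ∈ s, (f i - d) ^ d ≤ k * n ^ d :=
  calc ∑ i ∈ s, (f i - d) ^ d
      ≤ ∑ i ∈ s, d.factorial * (f i).choose d := sum_le_sum fun i _ => by
        rw [← Nat.descFactorial_eq_factorial_mul_choose]
        exact (Nat.pow_le_pow_left (by omega) d).trans (Nat.pow_sub_le_descFactorial _ d)
    _ ≤ d.factorial * (k * n.choose d) := by rw [← mul_sum]; exact Nat.mul_le_mul_left _ h
    _ = k * n.descFactorial d := by rw [Nat.descFactorial_eq_factorial_mul_choose]; ring
    _ ≤ k * n ^ d := Nat.mul_le_mul_left _ (Nat.descFactorial_le_pow n d)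

theorem rpow_two_mul_sub_one_div_pow {x : ℝ} (hx : 0 ≤ x) {d : ℕ} (hd : d ≠ 0) :
    (x ^ ((2 * (d : ℝ) - 1) / d)) ^ d = x ^ (2 * d - 1) := by
  rw [← Real.rpow_natCast _ d, ← Real.rpow_mul hx, div_mul_cancel₀ _ (by positivity),
    ← Real.rpow_natCast, Nat.cast_sub (by omega)]
  push_cast
  rfl

theorem sum_le_of_sum_choose_le {ι : Type*} (s : Finset ι) (f : ι → ℕ) {d : ℕ} (hd : d ≠ 0)
    (k : ℕ) (h : ∑ i ∈ s, (f i).choose d ≤ k * (#s).choose d) :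
    ((∑ i ∈ s, f i : ℕ) : ℝ) ≤ (d + k) * (#s : ℝ) ^ ((2 * (d : ℝ) - 1) / d) := by
  set n := #s
  set e : ℝ := (2 * (d : ℝ) - 1) / d
  set M := ∑ i ∈ s, (f i - d)
  have hMpow : (M : ℝ) ^ d ≤ k * (n : ℝ) ^ (2 * d - 1) := by
    obtain ⟨d', rfl⟩ := Nat.exists_eq_succ_of_ne_zero hd
    have hsum : ∑ i ∈ s, ((f i - (d' + 1) : ℕ) : ℝ) ^ (d' + 1) ≤ k * (n : ℝ) ^ (d' + 1) := by
      exact_mod_cast sum_sub_pow_le_of_sum_choose_le s f _ k n h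
    calc (M : ℝ) ^ (d' + 1) = (∑ i ∈ s, ((f i - (d' + 1) : ℕ) : ℝ)) ^ (d' + 1) := by
          push_cast [M]; rfl
      _ ≤ (n : ℝ) ^ d' * ∑ i ∈ s, ((f i - (d' + 1) : ℕ) : ℝ) ^ (d' + 1) :=
          pow_sum_le_card_mul_sum_pow (fun i _ => by positivity) d'
      _ ≤ (n : ℝ) ^ d' * (k * (n : ℝ) ^ (d' + 1)) := by gcongr
      _ = k * (n : ℝ) ^ (2 * (d' + 1) - 1) := by
          rw [show 2 * (d' + 1) - 1 = d' + (d' + 1) by omega, pow_add]; ring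
  have hM : (M : ℝ) ≤ k * (n : ℝ) ^ e := by
    refine le_of_pow_le_pow_left₀ hd (by positivity) ?_
    rw [mul_pow, rpow_two_mul_sub_one_div_pow n.cast_nonneg hd]
    exact hMpow.trans (by gcongr; exact_mod_cast Nat.le_self_pow hd k)
  have he : 1 ≤ e := by
    have : (1 : ℝ) ≤ d := by exact_mod_cast Nat.one_le_iff_ne_zero.2 hd
    rw [le_div_iff₀ (by positivity)]
    linarith
  have hn : (n : ℝ) ≤ (n : ℝ) ^ e := by
    obtain hn | hn := n.eq_zero_or_pos
    · rw [hn, Nat.cast_zero]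
      exact Real.rpow_nonneg le_rfl e
    · exact Real.self_le_rpow_of_one_le (by exact_mod_cast hn) he
  have hsplit : ∑ i ∈ s, f i ≤ M + n * d :=
    calc ∑ i ∈ s, f i ≤ ∑ i ∈ s, (f i - d + d) := sum_le_sum fun i _ => by omega
      _ = M + n * d := by rw [sum_add_distrib, sum_const, smul_eq_mul]
  calc ((∑ i ∈ s, f i : ℕ) : ℝ) ≤ M + n * d := by exact_mod_cast hsplit
    _ ≤ k * (n : ℝ) ^ e + (n : ℝ) ^ e * d := by gcongr
    _ = (d + k) * (n : ℝ) ^ e := by ring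

theorem sum_choose_card_le_mul_choose {α : Type*} [DecidableEq α] (P : Finset α)
    (N : α → Finset α) (hN : ∀ p, N p ⊆ P) (d k : ℕ)
    (h : ∀ S ⊆ P, #S = d → #{p ∈ P | S ⊆ N p} ≤ k) :
    ∑ p ∈ P, (#(N p)).choose d ≤ k * (#P).choose d := by
  calc ∑ p ∈ P, (#(N p)).choose d
      = ∑ p ∈ P, #((P.powersetCard d).bipartiteAbove (fun p S => S ⊆ N p) p) := by
        refine sum_congr rfl fun p _ => ?_
        rw [← card_powersetCard, bipartiteAbove]
        congr 1
        ext S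
        simp only [mem_powersetCard, mem_filter]
        exact ⟨fun h => ⟨⟨h.1.trans (hN p), h.2⟩, h.1⟩, fun h => ⟨h.2, h.1.2⟩⟩
    _ = ∑ S ∈ P.powersetCard d, #(P.bipartiteBelow (fun p S => S ⊆ N p) S) :=
        sum_card_bipartiteAbove_eq_sum_card_bipartiteBelow _
    _ ≤ ∑ _S ∈ P.powersetCard d, k :=
        sum_le_sum fun S hS => h S (mem_powersetCard.1 hS).1 (mem_powersetCard.1 hS).2
    _ = k * (#P).choose d := by rw [sum_const, card_powersetCard, smul_eq_mul, mul_comm]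

section Equidistant

variable {V P ι : Type*} [NormedAddCommGroup V] [InnerProductSpace ℝ V] [MetricSpace P]
  [NormedAddTorsor V P]

theorem vsub_mem_orthogonal_vectorSpan_of_forall_dist_eq {s : ι → P} {r : ℝ} {p q : P}
    (hp : ∀ i, dist p (s i) = r) (hq : ∀ i, dist q (s i) = r) :
    q -ᵥ p ∈ (vectorSpan ℝ (Set.range s))ᗮ := by
  suffices vectorSpan ℝ (Set.range s) ≤ (ℝ ∙ (q -ᵥ p))ᗮ from
    Submodule.orthogonal_le this
      (Submodule.le_orthogonal_orthogonal _ (Submodule.mem_span_singleton_self _))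
  rw [vectorSpan_def, Submodule.span_le]
  rintro _ ⟨_, ⟨i, rfl⟩, _, ⟨j, rfl⟩, rfl⟩
  rw [SetLike.mem_coe, Submodule.mem_orthogonal_singleton_iff_inner_left]
  exact inner_vsub_vsub_of_dist_eq_of_dist_eq (by rw [hp, hq]) (by rw [hp, hq])

theorem eq_or_eq_or_eq_of_forall_dist_eq [FiniteDimensional ℝ V] [Fintype ι] [Nonempty ι]
    {s : ι → P} (hs : AffineIndependent ℝ s) (hcard : Fintype.card ι = finrank ℝ V) {r : ℝ}
    {p q x : P} (hp : ∀ i, dist p (s i) = r) (hq : ∀ i, dist q (s i) = r)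
    (hx : ∀ i, dist x (s i) = r) :
    p = q ∨ p = x ∨ q = x := by
  by_cases hpq : p = q
  · exact Or.inl hpq
  set W := vectorSpan ℝ (Set.range s)
  have hW : finrank ℝ W + 1 = finrank ℝ V := by
    rw [hs.finrank_vectorSpan (Nat.succ_pred_eq_of_pos Fintype.card_pos).symm, ← hcard]
    exact Nat.succ_pred_eq_of_pos Fintype.card_pos
  have hline : Wᗮ = ℝ ∙ (q -ᵥ p) := by
    refine (Submodule.eq_of_le_of_finrank_le ?_ ?_).symm
    · exact (Submodule.span_singleton_le_iff_mem _ _).2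
        (vsub_mem_orthogonal_vectorSpan_of_forall_dist_eq hp hq)
    · rw [Submodule.finrank_add_finrank_orthogonal' hW,
        finrank_span_singleton (vsub_ne_zero.2 (Ne.symm hpq))]
  have hqline : q ∈ AffineSubspace.mk' p (ℝ ∙ (q -ᵥ p)) := by
    rw [AffineSubspace.mem_mk']
    exact Submodule.mem_span_singleton_self _
  have hxline : x ∈ AffineSubspace.mk' p (ℝ ∙ (q -ᵥ p)) := by
    rw [AffineSubspace.mem_mk', ← hline]
    exact vsub_mem_orthogonal_vectorSpan_of_forall_dist_eq hp hx
  let S : Sphere P := ⟨s (Classical.arbitrary ι), r⟩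
  have hpS : p ∈ S := hp _
  obtain hqp | hq' :=
    (S.eq_or_eq_secondInter_of_mem_mk'_span_singleton_iff_mem hpS hqline).2 (hq _)
  · exact Or.inl hqp.symm
  obtain hxp | hx' :=
    (S.eq_or_eq_secondInter_of_mem_mk'_span_singleton_iff_mem hpS hxline).2 (hx _)
  · exact Or.inr (Or.inl hxp.symm)
  · exact Or.inr (Or.inr (hq'.trans hx'.symm))

end Equidistant

noncomputable def unitNeighbors {α : Type*} [PseudoMetricSpace α] (P : Finset α) (p : α) :
    Finset α :=
  {q ∈ P | dist p q = 1}

theorem ncard_unitDistancePairs {α : Type*} [PseudoMetricSpace α] (P : Finset α) :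
    Set.ncard {q : α × α | q.1 ∈ P ∧ q.2 ∈ P ∧ dist q.1 q.2 = 1} =
      ∑ p ∈ P, #(unitNeighbors P p) := by
  have hset : {q : α × α | q.1 ∈ P ∧ q.2 ∈ P ∧ dist q.1 q.2 = 1} =
      ↑{q ∈ P ×ˢ P | dist q.1 q.2 = 1} := by
    ext q
    simp [and_assoc]
  rw [hset, Set.ncard_coe_finset, card_filter, sum_product]
  exact sum_congr rfl fun p _ => (card_filter _ _).symm

theorem card_filter_subset_unitNeighbors_le_two {V P : Type*} [NormedAddCommGroup V]
    [InnerProductSpace ℝ V] [MetricSpace P] [NormedAddTorsor V P] [FiniteDimensional ℝ V]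
    [DecidableEq P] (A : Finset P) {S : Finset P} (hS : S.Nonempty) (hcard : #S = finrank ℝ V)
    (hind : AffineIndependent ℝ ((↑) : S → P)) :
    #{p ∈ A | S ⊆ unitNeighbors A p} ≤ 2 := by
  have : Nonempty S := hS.coe_sort
  by_contra! h
  obtain ⟨a, ha, b, hb, c, hc, hab, hac, hbc⟩ := two_lt_card.1 h
  have hunit : ∀ x ∈ {p ∈ A | S ⊆ unitNeighbors A p}, ∀ i : S, dist x i = 1 := fun x hx i =>
    (mem_filter.1 ((mem_filter.1 hx).2 i.2)).2
  obtain h | h | h := eq_or_eq_or_eq_of_forall_dist_eq hind (by simpa using hcard)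
    (hunit a ha) (hunit b hb) (hunit c hc)
  exacts [hab h, hac h, hbc h]

theorem unit_distances_affinely_independent (d : ℕ) (hd : 2 ≤ d) :
    ∃ C : ℝ, 0 < C ∧
      ∀ P : Finset (EuclideanSpace ℝ (Fin d)),
        (∀ S : Finset (EuclideanSpace ℝ (Fin d)), S ⊆ P → S.card = d →
          AffineIndependent ℝ (fun s : S => (s : EuclideanSpace ℝ (Fin d)))) →
        (Set.ncard {q : EuclideanSpace ℝ (Fin d) × EuclideanSpace ℝ (Fin d) |
            q.1 ∈ P ∧ q.2 ∈ P ∧ dist q.1 q.2 = 1} : ℝ) ≤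
          C * (P.card : ℝ) ^ ((2 * (d : ℝ) - 1) / d) := by
  classical
  refine ⟨d + 2, by positivity, fun P hP => ?_⟩
  have hcount : ∑ p ∈ P, (#(unitNeighbors P p)).choose d ≤ 2 * (#P).choose d :=
    sum_choose_card_le_mul_choose P (unitNeighbors P) (fun _ => filter_subset _ _) d 2
      fun S hSP hS => card_filter_subset_unitNeighbors_le_two P (card_pos.1 (by omega))
        (by simp [hS]) (hP S hSP hS)
  rw [ncard_unitDistancePairs]
  exact_mod_cast sum_le_of_sum_choose_le P _ (by omega) 2 hcount
end

section
/- For all sufficiently small δ > 0 and points c_1, c_2 ∈ ℝ² with |c_1 - c_2| ≤ 2 - η (where η > 0 is fixed), the Lebesgue measure of the intersection of annuli A(c_1, δ) ∩ A(c_2, δ) is at most C_η δ² / (δ + |c_1 - c_2|), where A(c, δ) = {x ∈ ℝ² : 1 - 2δ ≤ |x - c| ≤ 1 + 2δ}. -/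
/-!
Put the centres at `(0, 0)` and `(d, 0)`, `d = |c₁ - c₂|`. Subtracting the two annulus
inequalities `(1 - 2δ)² ≤ x² + y² ≤ (1 + 2δ)²` and `(1 - 2δ)² ≤ (x - d)² + y² ≤ (1 + 2δ)²`
confines `x` to an interval of length `8δ / d` around `d / 2`, and each vertical slice
`{y | (1 - 2δ)² - x² ≤ y² ≤ (1 - 2δ)² - x² + 8δ}` has length at most `8δ / √((1 - 2δ)² - x²)`.
When `d ≤ 2 - η` and `d ≫ δ / η` the root stays above `η / 4`, so Fubini gives `O(δ² / (η d))`;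
when `d ≲ δ / η` the area `8πδ` of one annulus is already `O(δ² / (η (δ + d)))`.
-/

open MeasureTheory Metric Set

def annulus {α : Type*} [PseudoMetricSpace α] (c : α) (r R : ℝ) : Set α :=
  {x | r ≤ dist x c ∧ dist x c ≤ R}

lemma Isometry.preimage_annulus {α β : Type*} [PseudoMetricSpace α] [PseudoMetricSpace β]
    {f : α → β} (hf : Isometry f) (x : α) (r R : ℝ) :
    f ⁻¹' annulus (f x) r R = annulus x r R := by
  ext y
  simp [annulus, hf.dist_eq]

lemma measurableSet_annulus {α : Type*} [PseudoMetricSpace α] [MeasurableSpace α]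
    [OpensMeasurableSpace α] (c : α) (r R : ℝ) : MeasurableSet (annulus c r R) :=
  (isClosed_le continuous_const (continuous_id.dist continuous_const)).inter
    (isClosed_le (continuous_id.dist continuous_const) continuous_const) |>.measurableSet

lemma Real.volume_setOf_sq_mem_Icc_le {A h σ : ℝ} (hσ : 0 < σ) (hσA : σ ^ 2 ≤ A) (hh : 0 ≤ h) :
    volume {b : ℝ | b ^ 2 ∈ Icc A (A + h)} ≤ ENNReal.ofReal (h / σ) := by
  set s := √A
  set t := √(A + h)
  have hσs : σ ≤ s := Real.le_sqrt_of_sq_le hσA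
  have hst : s ≤ t := Real.sqrt_le_sqrt (by linarith)
  have hmul : (t - s) * (t + s) = h := by
    rw [show (t - s) * (t + s) = t ^ 2 - s ^ 2 by ring, Real.sq_sqrt (by nlinarith),
      Real.sq_sqrt (by nlinarith)]
    ring
  have hsub : {b : ℝ | b ^ 2 ∈ Icc A (A + h)} ⊆ Icc (-t) (-s) ∪ Icc s t := by
    rintro b ⟨hAb, hbh⟩
    have habs : s ≤ |b| ∧ |b| ≤ t := by
      rw [← Real.sqrt_sq_eq_abs]
      exact ⟨Real.sqrt_le_sqrt hAb, Real.sqrt_le_sqrt hbh⟩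
    rcases abs_cases b with ⟨hb, -⟩ | ⟨hb, -⟩ <;> rw [hb] at habs
    · exact Or.inr habs
    · exact Or.inl ⟨by linarith, by linarith⟩
  calc volume {b : ℝ | b ^ 2 ∈ Icc A (A + h)}
      ≤ volume (Icc (-t) (-s)) + volume (Icc s t) :=
        (measure_mono hsub).trans (measure_union_le _ _)
    _ = ENNReal.ofReal (2 * (t - s)) := by
      rw [Real.volume_Icc, Real.volume_Icc, ← ENNReal.ofReal_add (by linarith) (by linarith)]
      ring_nf
    _ ≤ ENNReal.ofReal (h / σ) := by
      apply ENNReal.ofReal_le_ofReal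
      rw [le_div_iff₀ hσ]
      nlinarith

lemma MeasureTheory.Measure.prod_apply_le_of_slice_le {α β : Type*} [MeasurableSpace α]
    [MeasurableSpace β] {μ : Measure α} {ν : Measure β} [SFinite ν] {s : Set (α × β)}
    (hs : MeasurableSet s) {I : Set α} (hI : MeasurableSet I) {m : ENNReal} (hsI : ∀ p ∈ s, p.1 ∈ I)
    (hslice : ∀ a ∈ I, ν (Prod.mk a ⁻¹' s) ≤ m) :
    μ.prod ν s ≤ m * μ I := by
  have hslice' : ∀ a, ν (Prod.mk a ⁻¹' s) ≤ I.indicator (fun _ ↦ m) a := by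
    intro a
    by_cases ha : a ∈ I
    · simpa [ha] using hslice a ha
    · have : Prod.mk a ⁻¹' s = ∅ := eq_empty_of_forall_notMem fun b hb ↦ ha (hsI _ hb)
      simp [this]
  calc μ.prod ν s = ∫⁻ a, ν (Prod.mk a ⁻¹' s) ∂μ := Measure.prod_apply hs
    _ ≤ ∫⁻ a, I.indicator (fun _ ↦ m) a ∂μ := lintegral_mono hslice'
    _ = m * μ I := by rw [lintegral_indicator hI, setLIntegral_const]

lemma EuclideanSpace.volume_annulus_fin_two (c : EuclideanSpace ℝ (Fin 2)) {r R : ℝ} (hr : 0 ≤ r)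
    (hrR : r ≤ R) : volume (annulus c r R) = ENNReal.ofReal (Real.pi * (R ^ 2 - r ^ 2)) := by
  have hA : annulus c r R = closedBall c R \ ball c r := by
    ext x
    simp [annulus, and_comm]
  rw [hA, measure_sdiff (ball_subset_closedBall.trans (closedBall_subset_closedBall hrR))
      measurableSet_ball.nullMeasurableSet (by simp [ENNReal.mul_eq_top]),
    EuclideanSpace.volume_closedBall_fin_two, EuclideanSpace.volume_ball_fin_two,
    ← ENNReal.ofReal_pow hr, ← ENNReal.ofReal_pow (hr.trans hrR),
    ← ENNReal.ofReal_mul (by positivity), ← ENNReal.ofReal_mul (by positivity),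
    ← ENNReal.ofReal_sub _ (by positivity)]
  congr 1
  ring

/-- The annuli `r ≤ ‖x‖ ≤ R` and `r ≤ ‖x - (d, 0)‖ ≤ R` of the Euclidean plane meet in this set,
written in coordinates since `ℝ × ℝ` carries the sup norm. -/
def annuliInter (r R d : ℝ) : Set (ℝ × ℝ) :=
  {p | r ^ 2 ≤ p.1 ^ 2 + p.2 ^ 2 ∧ p.1 ^ 2 + p.2 ^ 2 ≤ R ^ 2 ∧
    r ^ 2 ≤ (p.1 - d) ^ 2 + p.2 ^ 2 ∧ (p.1 - d) ^ 2 + p.2 ^ 2 ≤ R ^ 2}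

lemma measurableSet_annuliInter (r R d : ℝ) : MeasurableSet (annuliInter r R d) := by
  refine IsClosed.measurableSet ?_
  simp only [annuliInter, ofPred_and]
  apply_rules [IsClosed.inter, isClosed_le] <;> fun_prop

lemma EuclideanSpace.exists_isometry_measurePreserving {ι : Type*} [Fintype ι] [DecidableEq ι]
    (i : ι) (c₁ c₂ : EuclideanSpace ℝ ι) :
    ∃ g : EuclideanSpace ℝ ι → EuclideanSpace ℝ ι, Isometry g ∧ MeasurePreserving g ∧
      g 0 = c₁ ∧ g (EuclideanSpace.single i (dist c₁ c₂)) = c₂ := by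
  set e := EuclideanSpace.single i (dist c₁ c₂)
  let ρ := Submodule.reflection (ℝ ∙ (e - (c₂ - c₁)))ᗮ
  have hρ : ρ e = c₂ - c₁ := Submodule.reflection_sub (by simp [e, dist_eq_norm'])
  refine ⟨fun y ↦ ρ y + c₁, (isometry_add_right c₁).comp ρ.isometry,
    (measurePreserving_add_right volume c₁).comp ρ.measurePreserving, by simp, by simp [hρ]⟩

lemma EuclideanSpace.sq_dist_fin_two (x y : EuclideanSpace ℝ (Fin 2)) :
    dist x y ^ 2 = (x 0 - y 0) ^ 2 + (x 1 - y 1) ^ 2 := by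
  rw [EuclideanSpace.dist_eq, Real.sq_sqrt (by positivity)]
  simp [Fin.sum_univ_two, Real.dist_eq]

lemma volume_annulus_inter_le_volume_annuliInter (c₁ c₂ : EuclideanSpace ℝ (Fin 2)) {r R : ℝ}
    (hr : 0 ≤ r) :
    volume (annulus c₁ r R ∩ annulus c₂ r R) ≤ volume (annuliInter r R (dist c₁ c₂)) := by
  set d := dist c₁ c₂
  obtain ⟨g, hg, hgvol, hg₁, hg₂⟩ := EuclideanSpace.exists_isometry_measurePreserving 0 c₁ c₂
  have hΦ : MeasurePreserving (fun y : EuclideanSpace ℝ (Fin 2) ↦ (y 0, y 1)) :=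
    (volume_preserving_finTwoArrow ℝ).comp (PiLp.volume_preserving_ofLp (Fin 2))
  rw [← hgvol.measure_preimage
      ((measurableSet_annulus c₁ r R).inter (measurableSet_annulus c₂ r R)).nullMeasurableSet,
    ← hg₁, ← hg₂, preimage_inter, hg.preimage_annulus, hg.preimage_annulus,
    ← hΦ.measure_preimage (measurableSet_annuliInter r R d).nullMeasurableSet]
  refine measure_mono ?_
  rintro y ⟨⟨hy₁r, hy₁R⟩, hy₂r, hy₂R⟩
  have h₁ : dist y 0 ^ 2 = y 0 ^ 2 + y 1 ^ 2 := by simpa using EuclideanSpace.sq_dist_fin_two y 0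
  have h₂ : dist y (EuclideanSpace.single 0 d) ^ 2 = (y 0 - d) ^ 2 + y 1 ^ 2 := by
    simp [EuclideanSpace.sq_dist_fin_two]
  simp only [mem_preimage, annuliInter, mem_ofPred_eq, ← h₁, ← h₂]
  exact ⟨pow_le_pow_left₀ hr hy₁r 2, pow_le_pow_left₀ dist_nonneg hy₁R 2,
    pow_le_pow_left₀ hr hy₂r 2, pow_le_pow_left₀ dist_nonneg hy₂R 2⟩

lemma volume_annuliInter_le {r R d σ : ℝ} (hd : 0 < d) (hσ : 0 < σ) (hrR : r ^ 2 ≤ R ^ 2)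
    (hσr : ∀ a ∈ closedBall (d / 2) ((R ^ 2 - r ^ 2) / (2 * d)), σ ^ 2 ≤ r ^ 2 - a ^ 2) :
    volume (annuliInter r R d) ≤ ENNReal.ofReal ((R ^ 2 - r ^ 2) ^ 2 / (d * σ)) := by
  set h := R ^ 2 - r ^ 2
  have hh : 0 ≤ h := sub_nonneg.2 hrR
  rw [Measure.volume_eq_prod]
  refine (Measure.prod_apply_le_of_slice_le (measurableSet_annuliInter r R d)
    (I := closedBall (d / 2) (h / (2 * d))) measurableSet_closedBall (m := ENNReal.ofReal (h / σ))
    ?_ ?_).trans ?_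
  · rintro ⟨a, b⟩ ⟨h1, h2, h3, h4⟩
    have h2d : 0 < 2 * d := by positivity
    rw [mem_closedBall, Real.dist_eq, le_div_iff₀ h2d, ← abs_of_pos h2d, ← abs_mul, abs_le]
    constructor <;> nlinarith
  · intro a ha
    refine (measure_mono ?_).trans (Real.volume_setOf_sq_mem_Icc_le hσ (hσr a ha) hh)
    rintro b ⟨h1, h2, -⟩
    constructor <;> simp only at h1 h2 ⊢ <;> linarith
  · rw [Real.volume_closedBall, ← ENNReal.ofReal_mul (by positivity)]
    refine le_of_eq (congrArg _ ?_)
    field_simp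

section UnitAnnuli

variable {η δ : ℝ} {c₁ c₂ : EuclideanSpace ℝ (Fin 2)}

lemma volume_annulus_inter_le_of_dist_le (hη : 0 < η) (hη₁ : η ≤ 1) (hδ : 0 < δ)
    (hδ₁ : 2 * δ ≤ 1) (hd : dist c₁ c₂ ≤ 16 * δ / η) :
    volume (annulus c₁ (1 - 2 * δ) (1 + 2 * δ) ∩ annulus c₂ (1 - 2 * δ) (1 + 2 * δ)) ≤
      ENNReal.ofReal (512 / η * δ ^ 2 / (δ + dist c₁ c₂)) := by
  refine (measure_mono inter_subset_left).trans ?_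
  rw [EuclideanSpace.volume_annulus_fin_two c₁ (by linarith) (by linarith)]
  apply ENNReal.ofReal_le_ofReal
  have hηd : η * dist c₁ c₂ ≤ 16 * δ := by rwa [le_div_iff₀' hη] at hd
  have hsum : η * (δ + dist c₁ c₂) ≤ 17 * δ := by nlinarith
  rw [div_mul_eq_mul_div, div_div, le_div_iff₀ (by positivity),
    show (1 + 2 * δ) ^ 2 - (1 - 2 * δ) ^ 2 = 8 * δ by ring]
  nlinarith [mul_le_mul_of_nonneg_left hsum (by positivity : 0 ≤ Real.pi * (8 * δ)),
    Real.pi_lt_d2]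

lemma volume_annulus_inter_le_of_lt_dist (hη : 0 < η) (hη₁ : η ≤ 1) (hδ : 0 < δ)
    (hδη : δ ≤ η / 16) (hd : 16 * δ / η < dist c₁ c₂) (hd₂ : dist c₁ c₂ ≤ 2 - η) :
    volume (annulus c₁ (1 - 2 * δ) (1 + 2 * δ) ∩ annulus c₂ (1 - 2 * δ) (1 + 2 * δ)) ≤
      ENNReal.ofReal (512 / η * δ ^ 2 / (δ + dist c₁ c₂)) := by
  set d := dist c₁ c₂
  have hηd : 16 * δ < η * d := by rwa [div_lt_iff₀' hη] at hd
  have hd₀ : 0 < d := by nlinarith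
  have hwidth : (1 + 2 * δ) ^ 2 - (1 - 2 * δ) ^ 2 = 8 * δ := by ring
  have hσ : ∀ a ∈ closedBall (d / 2) (((1 + 2 * δ) ^ 2 - (1 - 2 * δ) ^ 2) / (2 * d)),
      (η / 4) ^ 2 ≤ (1 - 2 * δ) ^ 2 - a ^ 2 := by
    intro a ha
    have hw : 8 * δ / (2 * d) ≤ η / 4 := by
      rw [div_le_iff₀ (by positivity)]
      nlinarith
    rw [mem_closedBall, Real.dist_eq, hwidth, abs_le] at ha
    have ha₁ : a ≤ 1 - η / 4 := by linarith
    have ha₂ : -(1 - η / 4) ≤ a := by linarith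
    nlinarith
  refine (volume_annulus_inter_le_volume_annuliInter c₁ c₂ (by linarith)).trans <|
    (volume_annuliInter_le hd₀ (by positivity) (by nlinarith) hσ).trans ?_
  apply ENNReal.ofReal_le_ofReal
  rw [hwidth, div_mul_eq_mul_div, div_div, div_le_div_iff₀ (by positivity) (by positivity)]
  have hδd : δ ≤ d := by nlinarith
  nlinarith [mul_le_mul_of_nonneg_left hδd (by positivity : 0 ≤ δ ^ 2 * η)]

end UnitAnnuli

theorem annuli_intersection_bound (η : ℝ) (hη : 0 < η) :
    ∃ C : ℝ, 0 < C ∧ ∃ δ₀ : ℝ, 0 < δ₀ ∧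
      ∀ δ : ℝ, 0 < δ → δ < δ₀ →
      ∀ c₁ c₂ : EuclideanSpace ℝ (Fin 2), dist c₁ c₂ ≤ 2 - η →
      volume ({x : EuclideanSpace ℝ (Fin 2) |
            1 - 2 * δ ≤ dist x c₁ ∧ dist x c₁ ≤ 1 + 2 * δ} ∩
          {x : EuclideanSpace ℝ (Fin 2) |
            1 - 2 * δ ≤ dist x c₂ ∧ dist x c₂ ≤ 1 + 2 * δ}) ≤
        ENNReal.ofReal (C * δ ^ 2 / (δ + dist c₁ c₂)) := by
  set t := min η 1
  have ht : 0 < t := lt_min hη one_pos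
  have ht₁ : t ≤ 1 := min_le_right η 1
  refine ⟨512 / t, by positivity, t / 16, by positivity, fun δ hδ hδ₀ c₁ c₂ hd ↦ ?_⟩
  change volume (annulus c₁ (1 - 2 * δ) (1 + 2 * δ) ∩ annulus c₂ (1 - 2 * δ) (1 + 2 * δ)) ≤ _
  rcases le_or_gt (dist c₁ c₂) (16 * δ / t) with hsmall | hlarge
  · exact volume_annulus_inter_le_of_dist_le ht ht₁ hδ (by linarith) hsmall
  · exact volume_annulus_inter_le_of_lt_dist ht ht₁ hδ hδ₀.le hlarge
      (hd.trans (by linarith [min_le_left η 1]))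
end

section
/- There is a constant C > 0 such that for all δ ∈ (0, 1/2) and κ ≥ 0, if (x_1, y_1, z_1) and (x_2, y_2, z_2) both lie in the shell A(0, δ) = {p ∈ ℝ³ : 1 - 2δ ≤ |p| ≤ 1 + 2δ} and |(x_1, y_1) − (x_2, y_2)| ≤ κ, then |(x_1, y_1, z_1) − (x_2, y_2, z_2)| ≤ C max(δ^{1/2}, κ^{1/2}) provided z_1 and z_2 have the same sign. -/
/-!
Write `p = (h, z)` with `h` the horizontal projection. On the shell `‖p‖²` varies by at most `8δ`,
and by the reverse triangle inequality `‖h₁‖² - ‖h₂‖²` is at most `‖h₁ - h₂‖ (‖h₁‖ + ‖h₂‖) ≤ 4κ`,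
so `|z₁² - z₂²| ≤ 8δ + 4κ`. When `z₁, z₂` have the same sign, `|z₁ - z₂| ≤ |z₁ + z₂|`, hence
`(z₁ - z₂)² ≤ |z₁² - z₂²|`. Thus `dist² ≤ κ² + 8δ + 4κ`, which is `O(max δ κ)` for `κ ≤ 1`, while
for `κ ≥ 1` the trivial bound `dist ≤ 4` suffices.
-/

open Set

lemma abs_sq_norm_sub_sq_norm_le {E : Type*} [SeminormedAddCommGroup E] (u v : E) :
    |‖u‖ ^ 2 - ‖v‖ ^ 2| ≤ ‖u - v‖ * (‖u‖ + ‖v‖) := by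
  rw [sq_sub_sq, abs_mul, abs_of_nonneg (by positivity : 0 ≤ ‖u‖ + ‖v‖), mul_comm]
  gcongr
  exact abs_norm_sub_norm_le u v

lemma sq_sub_le_abs_sq_sub_sq {a b : ℝ} (hab : 0 ≤ a * b) : (a - b) ^ 2 ≤ |a ^ 2 - b ^ 2| := by
  have hle : |a - b| ≤ |a + b| := sq_le_sq.mp (by nlinarith)
  calc (a - b) ^ 2 = |a - b| * |a - b| := by rw [abs_mul_abs_self, sq]
    _ ≤ |a - b| * |a + b| := by gcongr
    _ = |a ^ 2 - b ^ 2| := by rw [← abs_mul, sq_sub_sq, mul_comm]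

lemma abs_sq_sub_sq_le_of_mem_Icc {s t lo hi : ℝ} (hlo : 0 ≤ lo) (hs : s ∈ Icc lo hi)
    (ht : t ∈ Icc lo hi) : |s ^ 2 - t ^ 2| ≤ hi ^ 2 - lo ^ 2 := by
  have hsq : ∀ r ∈ Icc lo hi, r ^ 2 ∈ Icc (lo ^ 2) (hi ^ 2) := fun r hr =>
    ⟨pow_le_pow_left₀ hlo hr.1 2, pow_le_pow_left₀ (hlo.trans hr.1) hr.2 2⟩
  exact Real.dist_le_of_mem_Icc (hsq s hs) (hsq t ht)

namespace EuclideanSpace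

noncomputable def horizontalProj (p : EuclideanSpace ℝ (Fin 3)) : EuclideanSpace ℝ (Fin 2) :=
  !₂[p 0, p 1]

lemma norm_sq_eq_norm_horizontalProj_sq_add (p : EuclideanSpace ℝ (Fin 3)) :
    ‖p‖ ^ 2 = ‖horizontalProj p‖ ^ 2 + p 2 ^ 2 := by
  simp [horizontalProj, EuclideanSpace.real_norm_sq_eq, Fin.sum_univ_three, Fin.sum_univ_two]

lemma dist_sq_eq_dist_horizontalProj_sq_add (p q : EuclideanSpace ℝ (Fin 3)) :
    dist p q ^ 2 = dist (horizontalProj p) (horizontalProj q) ^ 2 + (p 2 - q 2) ^ 2 := by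
  simp [dist_eq_norm, EuclideanSpace.real_norm_sq_eq, horizontalProj, Fin.sum_univ_three,
    Fin.sum_univ_two]

lemma dist_horizontalProj (p q : EuclideanSpace ℝ (Fin 3)) :
    dist (horizontalProj p) (horizontalProj q) = √((p 0 - q 0) ^ 2 + (p 1 - q 1) ^ 2) := by
  simp [EuclideanSpace.dist_eq, horizontalProj, Fin.sum_univ_two, Real.dist_eq, sq_abs]

lemma norm_horizontalProj_le (p : EuclideanSpace ℝ (Fin 3)) : ‖horizontalProj p‖ ≤ ‖p‖ := by
  rw [← sq_le_sq₀ (norm_nonneg _) (norm_nonneg _), norm_sq_eq_norm_horizontalProj_sq_add p]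
  nlinarith [sq_nonneg (p 2)]

end EuclideanSpace

open EuclideanSpace

lemma sq_sub_vertical_le_of_mem_shell {δ : ℝ} {p q : EuclideanSpace ℝ (Fin 3)} (hδ : δ ≤ 1 / 2)
    (hp : ‖p‖ ∈ Icc (1 - 2 * δ) (1 + 2 * δ)) (hq : ‖q‖ ∈ Icc (1 - 2 * δ) (1 + 2 * δ))
    (hsign : 0 ≤ p 2 * q 2) :
    (p 2 - q 2) ^ 2 ≤ 8 * δ + 4 * dist (horizontalProj p) (horizontalProj q) := by
  have hshell := abs_sq_sub_sq_le_of_mem_Icc (by linarith) hp hq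
  have hhoriz := abs_sq_norm_sub_sq_norm_le (horizontalProj p) (horizontalProj q)
  have hsum : ‖horizontalProj p‖ + ‖horizontalProj q‖ ≤ 4 := by
    linarith [norm_horizontalProj_le p, norm_horizontalProj_le q, hp.2, hq.2]
  have hvert : p 2 ^ 2 - q 2 ^ 2 = (‖p‖ ^ 2 - ‖q‖ ^ 2)
      - (‖horizontalProj p‖ ^ 2 - ‖horizontalProj q‖ ^ 2) := by
    rw [norm_sq_eq_norm_horizontalProj_sq_add p, norm_sq_eq_norm_horizontalProj_sq_add q]; ring
  calc (p 2 - q 2) ^ 2 ≤ |p 2 ^ 2 - q 2 ^ 2| := sq_sub_le_abs_sq_sub_sq hsign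
    _ ≤ |‖p‖ ^ 2 - ‖q‖ ^ 2| + |‖horizontalProj p‖ ^ 2 - ‖horizontalProj q‖ ^ 2| := by
        rw [hvert]; exact abs_sub _ _
    _ ≤ 8 * δ + 4 * dist (horizontalProj p) (horizontalProj q) := by
        rw [← dist_eq_norm] at hhoriz
        nlinarith [dist_nonneg (x := horizontalProj p) (y := horizontalProj q)]

theorem shell_points_close_of_close_projection :
    ∃ C : ℝ, 0 < C ∧
      ∀ δ κ : ℝ, 0 < δ → δ < 1 / 2 → 0 ≤ κ →
      ∀ p₁ p₂ : EuclideanSpace ℝ (Fin 3),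
        (1 - 2 * δ ≤ ‖p₁‖ ∧ ‖p₁‖ ≤ 1 + 2 * δ) →
        (1 - 2 * δ ≤ ‖p₂‖ ∧ ‖p₂‖ ≤ 1 + 2 * δ) →
        Real.sqrt ((p₁ 0 - p₂ 0) ^ 2 + (p₁ 1 - p₂ 1) ^ 2) ≤ κ →
        0 ≤ p₁ 2 * p₂ 2 →
        dist p₁ p₂ ≤ C * max (Real.sqrt δ) (Real.sqrt κ) := by
  refine ⟨4, by norm_num, fun δ κ hδ hδ' hκ p₁ p₂ hp₁ hp₂ hproj hsign => ?_⟩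
  rw [← dist_horizontalProj] at hproj
  have hvert := sq_sub_vertical_le_of_mem_shell hδ'.le hp₁ hp₂ hsign
  have hsq : dist p₁ p₂ ^ 2 ≤ κ ^ 2 + 8 * δ + 4 * κ := by
    rw [dist_sq_eq_dist_horizontalProj_sq_add]
    nlinarith [dist_nonneg (x := horizontalProj p₁) (y := horizontalProj p₂)]
  have hdiam : dist p₁ p₂ ≤ 4 := by linarith [dist_le_norm_add_norm p₁ p₂, hp₁.2, hp₂.2]
  have hmax : dist p₁ p₂ ^ 2 ≤ 16 * max δ κ := by
    rcases le_total κ 1 with hκ1 | hκ1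
    · nlinarith [le_max_left δ κ, le_max_right δ κ]
    · nlinarith [le_max_right δ κ, dist_nonneg (x := p₁) (y := p₂)]
  calc dist p₁ p₂ ≤ √(16 * max δ κ) := Real.le_sqrt_of_sq_le hmax
    _ = 4 * max √δ √κ := by
      rw [Real.sqrt_mul (by norm_num), Real.sqrt_monotone.map_max,
        show (16 : ℝ) = 4 ^ 2 by norm_num, Real.sqrt_sq (by norm_num)]
end
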